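/- For every natural number n and every subset s of (Fin n → ℚ) that is definable without parameters in the first-order language with one binary relation symbol, interpreted as the order ≤ on ℚ, the following holds: if s contains an injective tuple, then for every injective tuple x : Fin n → ℚ there exists a permutation σ of Fin n with x ∘ σ ∈ s. -/

import Mathlib

/-!
Two injective n-tuples of rationals have the same order type once one of them is permuted. The
finite partial isomorphism between them then extends, by Cantor's back-and-forth argument, to an
order automorphism of ℚ, and automorphisms preserve ∅-definable sets.
-/

open FirstOrder Language

attribute [local instance] FirstOrder.Language.orderStructure

namespace Order

variable {α β : Type*} [LinearOrder α] [LinearOrder β]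
  [Countable α] [DenselyOrdered α] [NoMinOrder α] [NoMaxOrder α] [Nonempty α]
  [Countable β] [DenselyOrdered β] [NoMinOrder β] [NoMaxOrder β] [Nonempty β]

/-- Cantor's back-and-forth construction of `Order.iso_of_countable_dense`, started from `p`
instead of the empty partial isomorphism. -/
theorem PartialIso.exists_orderIso_extends (p : PartialIso α β) :
    ∃ g : α ≃o β, ∀ q ∈ p.val, g q.1 = q.2 := by
  cases nonempty_encodable α
  cases nonempty_encodable β
  let to_cofinal : α ⊕ β → Cofinal (PartialIso α β) := fun q ↦
    Sum.recOn q (definedAtLeft β) (definedAtRight α)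
  let I : Ideal (PartialIso α β) := idealOfCofinals p to_cofinal
  let F a := funOfIdeal a I (cofinal_meets_idealOfCofinals _ to_cofinal (Sum.inl a))
  let G b := invOfIdeal b I (cofinal_meets_idealOfCofinals _ to_cofinal (Sum.inr b))
  refine ⟨OrderIso.ofCmpEqCmp (fun a ↦ (F a).val) (fun b ↦ (G b).val) fun a b ↦ ?_, ?_⟩
  · obtain ⟨f, hf, ha⟩ := (F a).prop
    obtain ⟨g, hg, hb⟩ := (G b).prop
    obtain ⟨m, -, fm, gm⟩ := I.directed _ hf _ hg
    exact m.prop (a, _) (fm ha) (_, b) (gm hb)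
  · rintro ⟨a, b⟩ hab
    obtain ⟨f, hf, ha⟩ := (F a).prop
    obtain ⟨m, -, fm, pm⟩ := I.directed _ hf _ (mem_idealOfCofinals p to_cofinal)
    have hcmp := m.prop (a, _) (fm ha) (a, b) (pm hab)
    exact (eq_iff_eq_of_cmp_eq_cmp hcmp).mp rfl

theorem exists_orderIso_comp_eq_of_cmp_eq {ι : Type*} [Finite ι] (x : ι → α) (y : ι → β)
    (h : ∀ i j, cmp (x i) (x j) = cmp (y i) (y j)) : ∃ g : α ≃o β, g ∘ x = y := by
  classical
  have := Fintype.ofFinite ι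
  let p : PartialIso α β := ⟨Finset.univ.image fun i ↦ (x i, y i), by simp [h]⟩
  obtain ⟨g, hg⟩ := p.exists_orderIso_extends
  exact ⟨g, funext fun i ↦ hg (x i, y i) (Finset.mem_image_of_mem _ (Finset.mem_univ i))⟩

end Order

theorem Function.Injective.exists_perm_strictMono_comp {α : Type*} [LinearOrder α] {n : ℕ}
    {x : Fin n → α} (hx : Injective x) : ∃ σ : Equiv.Perm (Fin n), StrictMono (x ∘ σ) :=
  ⟨Tuple.sort x, (Tuple.monotone_sort x).strictMono_of_injective (hx.comp (Equiv.injective _))⟩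

theorem Function.Injective.exists_perm_cmp_comp_eq {α β : Type*} [LinearOrder α] [LinearOrder β]
    {n : ℕ} {x : Fin n → α} {y : Fin n → β} (hx : Injective x) (hy : Injective y) :
    ∃ σ : Equiv.Perm (Fin n), ∀ i j, cmp (y i) (y j) = cmp (x (σ i)) (x (σ j)) := by
  obtain ⟨ρ, hρ⟩ := hx.exists_perm_strictMono_comp
  obtain ⟨τ, hτ⟩ := hy.exists_perm_strictMono_comp
  refine ⟨τ.symm.trans ρ, fun i j ↦ ?_⟩
  obtain ⟨k, rfl⟩ := τ.surjective i
  obtain ⟨l, rfl⟩ := τ.surjective j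
  simpa using (hτ.cmp_map_eq k l).trans (hρ.cmp_map_eq k l).symm

theorem Set.Definable.comp_mem_iff {L : Language} {M α F : Type*} [L.Structure M]
    [EquivLike F M M] [L.StrongHomClass F M M] {s : Set (α → M)}
    (hs : (∅ : Set M).Definable L s) (g : F) (x : α → M) : g ∘ x ∈ s ↔ x ∈ s := by
  obtain ⟨φ, rfl⟩ := empty_definable_iff.mp hs
  exact StrongHomClass.realize_formula g φ

instance FirstOrder.Language.orderedStructure_orderStructure {M : Type*} [LE M] :
    Language.order.OrderedStructure M :=
  ⟨fun _ ↦ Iff.rfl⟩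

theorem statement14 (n : ℕ) (s : Set (Fin n → ℚ)) (h : Set.Definable ∅ Language.order s)
    (hex : ∃ x ∈ s, Function.Injective x) :
    ∀ x : Fin n → ℚ, Function.Injective x → ∃ σ : Equiv.Perm (Fin n), x ∘ σ ∈ s := by
  intro x hx
  obtain ⟨y, hys, hy⟩ := hex
  obtain ⟨σ, hσ⟩ := hx.exists_perm_cmp_comp_eq hy
  obtain ⟨g, hg⟩ := Order.exists_orderIso_comp_eq_of_cmp_eq y (x ∘ σ) hσ
  exact ⟨σ, hg ▸ (h.comp_mem_iff g y).mpr hys⟩
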